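/- The map 𝓘_⋆ : [φ] ↦ Δ_⋆(φ) is a well-defined ℝ[[λ]]-module isomorphism from the quotient module A[[λ]]/P_⋆[A[[λ]]] onto the solution module Sol_{P_⋆} := { u ∈ B[[λ]] : P_⋆(u) = 0 }. -/

import Mathlib

open Finset

noncomputable section

namespace NCQFT

theorem sum_ad_assoc {M : Type*} [AddCommMonoid M] (n : ℕ) (G : ℕ → ℕ → ℕ → M) :
    ∑ p ∈ antidiagonal n, ∑ q ∈ antidiagonal p.2, G p.1 q.1 q.2
      = ∑ p ∈ antidiagonal n, ∑ q ∈ antidiagonal p.1, G q.1 q.2 p.2 := by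
  rw [Finset.sum_sigma', Finset.sum_sigma']
  refine Finset.sum_nbij' (fun x => ⟨(x.1.1 + x.2.1, x.2.2), (x.1.1, x.2.1)⟩)
    (fun x => ⟨(x.2.1, x.2.2 + x.1.2), (x.2.2, x.1.2)⟩) ?_ ?_ ?_ ?_ ?_
  · rintro ⟨⟨a, k⟩, b, c⟩ h
    simp only [Finset.mem_sigma, Finset.HasAntidiagonal.mem_antidiagonal] at h ⊢
    refine ⟨by omega, ?_⟩
    try trivial
    try omega
  · rintro ⟨⟨i, c⟩, a, b⟩ h
    simp only [Finset.mem_sigma, Finset.HasAntidiagonal.mem_antidiagonal] at h ⊢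
    refine ⟨by omega, ?_⟩
    try trivial
    try omega
  · rintro ⟨⟨a, k⟩, b, c⟩ h
    simp only [Finset.mem_sigma, Finset.HasAntidiagonal.mem_antidiagonal] at h
    obtain ⟨-, h2⟩ := h
    subst h2
    rfl
  · rintro ⟨⟨i, c⟩, a, b⟩ h
    simp only [Finset.mem_sigma, Finset.HasAntidiagonal.mem_antidiagonal] at h
    obtain ⟨-, h2⟩ := h
    subst h2
    rfl
  · rintro ⟨⟨a, k⟩, b, c⟩ h
    rfl

theorem sum_ad_swap {M : Type*} [AddCommMonoid M] (n : ℕ) (G : ℕ → ℕ → ℕ → M) :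
    ∑ p ∈ antidiagonal n, ∑ q ∈ antidiagonal p.2, G p.1 q.1 q.2
      = ∑ p ∈ antidiagonal n, ∑ q ∈ antidiagonal p.2, G q.1 p.1 q.2 := by
  rw [Finset.sum_sigma', Finset.sum_sigma']
  refine Finset.sum_nbij' (fun x => ⟨(x.2.1, x.1.1 + x.2.2), (x.1.1, x.2.2)⟩)
    (fun x => ⟨(x.2.1, x.1.1 + x.2.2), (x.1.1, x.2.2)⟩) ?_ ?_ ?_ ?_ ?_
  · rintro ⟨⟨a, k⟩, b, c⟩ h
    simp only [Finset.mem_sigma, Finset.HasAntidiagonal.mem_antidiagonal] at h ⊢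
    refine ⟨by omega, ?_⟩
    try trivial
    try omega
  · rintro ⟨⟨b, k⟩, a, c⟩ h
    simp only [Finset.mem_sigma, Finset.HasAntidiagonal.mem_antidiagonal] at h ⊢
    refine ⟨by omega, ?_⟩
    try trivial
    try omega
  · rintro ⟨⟨a, k⟩, b, c⟩ h
    simp only [Finset.mem_sigma, Finset.HasAntidiagonal.mem_antidiagonal] at h
    obtain ⟨-, h2⟩ := h
    subst h2
    rfl
  · rintro ⟨⟨b, k⟩, a, c⟩ h
    simp only [Finset.mem_sigma, Finset.HasAntidiagonal.mem_antidiagonal] at h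
    obtain ⟨-, h2⟩ := h
    subst h2
    rfl
  · rintro ⟨⟨a, k⟩, b, c⟩ h
    rfl

variable {K : Type*} [CommRing K]

/-- The Cauchy-product scalar multiplication of `K[[λ]]` on `V[[λ]] = (ℕ → V)`. -/
def fpsSMul {V : Type*} [AddCommGroup V] [Module K V] (c : PowerSeries K) (v : ℕ → V) :
    ℕ → V :=
  fun n => ∑ p ∈ antidiagonal n, PowerSeries.coeff (R := K) p.1 c • v p.2

theorem fpsSMul_one {V : Type*} [AddCommGroup V] [Module K V] (v : ℕ → V) :
    fpsSMul (1 : PowerSeries K) v = v := by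
  funext n
  rw [fpsSMul, Finset.sum_eq_single (0, n)]
  · simp
  · rintro ⟨i, j⟩ hmem hne
    rw [PowerSeries.coeff_one, if_neg, zero_smul]
    rintro rfl
    apply hne
    simp only [Finset.HasAntidiagonal.mem_antidiagonal] at hmem
    simp [← hmem]
  · intro h
    exact absurd (by simp) h

theorem fpsSMul_mul {V : Type*} [AddCommGroup V] [Module K V] (c d : PowerSeries K)
    (v : ℕ → V) : fpsSMul (c * d) v = fpsSMul c (fpsSMul d v) := by
  funext n
  rw [fpsSMul]
  calc ∑ p ∈ antidiagonal n, PowerSeries.coeff (R := K) p.1 (c * d) • v p.2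
      = ∑ p ∈ antidiagonal n, ∑ q ∈ antidiagonal p.1,
          (PowerSeries.coeff (R := K) q.1 c * PowerSeries.coeff (R := K) q.2 d) • v p.2 := by
        refine Finset.sum_congr rfl fun p _ => ?_
        rw [PowerSeries.coeff_mul, Finset.sum_smul]
    _ = ∑ p ∈ antidiagonal n, ∑ q ∈ antidiagonal p.2,
          (PowerSeries.coeff (R := K) p.1 c * PowerSeries.coeff (R := K) q.1 d) • v q.2 :=
        (sum_ad_assoc n fun a b e => (PowerSeries.coeff (R := K) a c * PowerSeries.coeff (R := K) b d) • v e).symm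
    _ = fpsSMul c (fpsSMul d v) n := by
        rw [fpsSMul]
        refine Finset.sum_congr rfl fun p _ => ?_
        rw [fpsSMul, Finset.smul_sum]
        exact Finset.sum_congr rfl fun q _ => (mul_smul _ _ _)

instance fpsModule {V : Type*} [AddCommGroup V] [Module K V] :
    Module (PowerSeries K) (ℕ → V) where
  smul := fpsSMul
  one_smul := fpsSMul_one
  mul_smul := fpsSMul_mul
  smul_zero c := by
    funext n
    show fpsSMul c (0 : ℕ → V) n = 0
    simp [fpsSMul]
  smul_add c u v := by
    funext n
    show fpsSMul c (u + v) n = fpsSMul c u n + fpsSMul c v n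
    simp [fpsSMul, Finset.sum_add_distrib, smul_add]
  add_smul c d v := by
    funext n
    show fpsSMul (c + d) v n = fpsSMul c v n + fpsSMul d v n
    simp [fpsSMul, Finset.sum_add_distrib, add_smul]
  zero_smul v := by
    funext n
    show fpsSMul (0 : PowerSeries K) v n = 0
    simp [fpsSMul]

theorem fps_smul_apply {V : Type*} [AddCommGroup V] [Module K V]
    (c : PowerSeries K) (v : ℕ → V) (n : ℕ) :
    (c • v) n = ∑ p ∈ antidiagonal n, PowerSeries.coeff (R := K) p.1 c • v p.2 := rfl

/-- The `K[[λ]]`-linear map `V[[λ]] → W[[λ]]` induced by a family of `K`-linear maps,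
`F_⋆ = Σ λⁿ F_(n)`. -/
def starMap {V W : Type*} [AddCommGroup V] [Module K V] [AddCommGroup W] [Module K W]
    (F : ℕ → V →ₗ[K] W) : (ℕ → V) →ₗ[PowerSeries K] (ℕ → W) where
  toFun u := fun n => ∑ p ∈ antidiagonal n, F p.1 (u p.2)
  map_add' u v := by
    funext n
    simp [Finset.sum_add_distrib]
  map_smul' c u := by
    funext n
    show ∑ p ∈ antidiagonal n, F p.1 ((c • u) p.2)
        = (c • fun m => ∑ q ∈ antidiagonal m, F q.1 (u q.2)) n
    simp only [fps_smul_apply, map_sum, map_smul, Finset.smul_sum]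
    exact sum_ad_swap n fun a b e => PowerSeries.coeff (R := K) b c • F a (u e)

theorem starMap_apply {V W : Type*} [AddCommGroup V] [Module K V] [AddCommGroup W] [Module K W]
    (F : ℕ → V →ₗ[K] W) (u : ℕ → V) (n : ℕ) :
    starMap F u n = ∑ p ∈ antidiagonal n, F p.1 (u p.2) := rfl

/-- The coefficientwise application of a single `K`-linear map, as a `K[[λ]]`-linear map. -/
def cwMap {V W : Type*} [AddCommGroup V] [Module K V] [AddCommGroup W] [Module K W]
    (F : V →ₗ[K] W) : (ℕ → V) →ₗ[PowerSeries K] (ℕ → W) where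
  toFun u := fun n => F (u n)
  map_add' u v := by funext n; simp
  map_smul' c u := by
    funext n
    show F ((c • u) n) = (c • fun m => F (u m)) n
    simp only [fps_smul_apply, map_sum, map_smul]

theorem cwMap_apply {V W : Type*} [AddCommGroup V] [Module K V] [AddCommGroup W] [Module K W]
    (F : V →ₗ[K] W) (u : ℕ → V) (n : ℕ) : cwMap F u n = F (u n) := rfl


variable {B : Type*} [AddCommGroup B] [Module ℝ B]

/-- `chain D Pn [j₁, …, j_k] = D ∘ P_(j₁) ∘ D ∘ P_(j₂) ∘ ⋯ ∘ D ∘ P_(j_k) ∘ D`. -/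
def chain (D : B →ₗ[ℝ] B) (Pn : ℕ → B →ₗ[ℝ] B) : List ℕ → (B →ₗ[ℝ] B)
  | [] => D
  | j :: t => D ∘ₗ Pn j ∘ₗ chain D Pn t

/-- The `n`-th coefficient `Δ_(n)±` of the deformed Green's operator:
`Δ_(n)± = Σ_{k=1}^{n} Σ_{j₁+⋯+j_k = n, jᵢ ≥ 1} (−1)^k Δ_± ∘ P_(j₁) ∘ Δ_± ∘ ⋯ ∘ Δ_± ∘ P_(j_k) ∘ Δ_±`,
realized as a sum over all compositions `(j₁, …, j_k)` of `n` (for `n = 0` it equals `Δ_±`). -/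
def dGreen (D : B →ₗ[ℝ] B) (Pn : ℕ → B →ₗ[ℝ] B) (n : ℕ) : B →ₗ[ℝ] B :=
  ∑ c : Composition n, ((-1 : ℝ) ^ c.blocks.length) • chain D Pn c.blocks

/-- The family `Q_(n)` of `Q := Σ_{n ≥ 1} λⁿ P_(n)` (the `λ⁰`-coefficient is dropped). -/
def posPart (Pn : ℕ → B →ₗ[ℝ] B) : ℕ → B →ₗ[ℝ] B :=
  fun n => if n = 0 then 0 else Pn n

/-- The `ℝ[[λ]]`-bilinear extension of a bilinear form `β : B × B → ℝ` to `B[[λ]]`. -/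
def betaSeries (β : B →ₗ[ℝ] B →ₗ[ℝ] ℝ) (u v : ℕ → B) : PowerSeries ℝ :=
  PowerSeries.mk fun n => ∑ p ∈ antidiagonal n, β (u p.1) (v p.2)

/-- The family `P_(n)`, restricted to maps `A → A`
(using `P(A) ⊆ A` and `P_(n)(B) ⊆ A` for `n ≥ 1`). -/
def restA (A : Submodule ℝ B) (Pn : ℕ → B →ₗ[ℝ] B) (hPA : ∀ a ∈ A, Pn 0 a ∈ A)
    (hPpos : ∀ n, 0 < n → ∀ u : B, Pn n u ∈ A) (n : ℕ) : ↥A →ₗ[ℝ] ↥A :=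
  (Pn n).restrict (p := A) (q := A) (fun x hx => by
    rcases Nat.eq_zero_or_pos n with h | h
    · exact h ▸ hPA x hx
    · exact hPpos n h x)



theorem headI_cons_tail {l : List ℕ} (h : l ≠ []) : l.headI :: l.tail = l := by
  cases l with
  | nil => exact absurd rfl h
  | cons a t => rfl

theorem dGreen_zero (D : B →ₗ[ℝ] B) (Pn : ℕ → B →ₗ[ℝ] B) : dGreen D Pn 0 = D := by
  rw [dGreen]
  have h : ∀ c : Composition 0, ((-1 : ℝ) ^ c.blocks.length) • chain D Pn c.blocks = D := by
    intro c
    have hb : c.blocks = [] := by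
      rcases c.blocks.eq_nil_or_concat with h | ⟨l, b, h⟩
      · exact h
      · exfalso
        have hpos : 0 < b := c.blocks_pos (by rw [h]; simp)
        have := c.blocks_sum
        rw [h, List.sum_concat] at this
        omega
    rw [hb]
    simp [chain]
  rw [Finset.sum_congr rfl (fun c _ => h c), Finset.sum_const, Finset.card_univ,
    composition_card]
  simp

theorem comp_sum_head {M : Type*} [AddCommMonoid M] (n : ℕ) (f : List ℕ → M) :
    ∑ c : Composition (n + 1), f c.blocks
      = ∑ j ∈ Finset.range (n + 1), ∑ c : Composition (n - j), f ((j + 1) :: c.blocks) := by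
  rw [Finset.sum_sigma']
  have hne : ∀ c : Composition (n + 1), c.blocks ≠ [] := by
    intro c h
    have := c.blocks_sum
    rw [h] at this
    simp at this
  have hhead : ∀ c : Composition (n + 1), 1 ≤ c.blocks.headI ∧
      c.blocks.headI + c.blocks.tail.sum = n + 1 := by
    intro c
    have h1 : c.blocks.headI ∈ c.blocks := by
      obtain ⟨b, t, h⟩ := List.exists_cons_of_ne_nil (hne c)
      rw [h]
      simp
    have h2 := c.blocks_pos h1
    have h3 : (c.blocks.headI :: c.blocks.tail).sum = n + 1 := by
      rw [headI_cons_tail (hne c)]; exact c.blocks_sum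
    rw [List.sum_cons] at h3
    exact ⟨h2, h3⟩
  refine Finset.sum_bij'
    (fun c _ => (⟨c.blocks.headI - 1,
      ⟨c.blocks.tail, fun hi => c.blocks_pos (List.mem_of_mem_tail hi),
        by have := (hhead c).1; have := (hhead c).2; omega⟩⟩ :
        Σ j : ℕ, Composition (n - j)))
    (fun x hx => ⟨(x.1 + 1) :: x.2.blocks,
      (by rintro i hi
          rcases List.mem_cons.mp hi with rfl | h
          · omega
          · exact x.2.blocks_pos h),
      (by have h1 := (Finset.mem_sigma.mp hx).1
          rw [Finset.mem_range] at h1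
          rw [List.sum_cons, x.2.blocks_sum]
          omega)⟩)
    ?_ ?_ ?_ ?_ ?_
  · intro c _
    rw [Finset.mem_sigma]
    refine ⟨?_, Finset.mem_univ _⟩
    rw [Finset.mem_range]
    show c.blocks.headI - 1 < n + 1
    have := (hhead c).1; have := (hhead c).2
    omega
  · intro x hx
    exact Finset.mem_univ _
  · intro c hc
    apply Composition.ext
    show (c.blocks.headI - 1 + 1) :: c.blocks.tail = c.blocks
    rw [Nat.sub_add_cancel (hhead c).1, headI_cons_tail (hne c)]
  · intro x hx
    rfl
  · intro c hc
    show f c.blocks = f ((c.blocks.headI - 1 + 1) :: c.blocks.tail)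
    rw [Nat.sub_add_cancel (hhead c).1, headI_cons_tail (hne c)]

theorem dGreen_rec (D : B →ₗ[ℝ] B) (Pn : ℕ → B →ₗ[ℝ] B) (n : ℕ) (b : B) :
    dGreen D Pn (n + 1) b
      = -∑ j ∈ Finset.range (n + 1), D (Pn (j + 1) (dGreen D Pn (n - j) b)) := by
  have h := congrArg (fun F : B →ₗ[ℝ] B => F b)
    (comp_sum_head (M := B →ₗ[ℝ] B) n
      (fun l => ((-1 : ℝ) ^ l.length) • chain D Pn l))
  simp only [LinearMap.coe_sum, Finset.sum_apply, LinearMap.smul_apply] at h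
  rw [dGreen, LinearMap.sum_apply]
  simp only [LinearMap.smul_apply] at h ⊢
  rw [h, ← Finset.sum_neg_distrib]
  refine Finset.sum_congr rfl fun j _ => ?_
  rw [dGreen, LinearMap.sum_apply, map_sum, map_sum, ← Finset.sum_neg_distrib]
  refine Finset.sum_congr rfl fun c _ => ?_
  show ((-1 : ℝ) ^ (((j+1) :: c.blocks).length)) • chain D Pn ((j+1) :: c.blocks) b
      = -(D (Pn (j+1) (((-1 : ℝ) ^ c.blocks.length • chain D Pn c.blocks) b)))
  rw [List.length_cons, pow_succ]
  show ((-1 : ℝ) ^ c.blocks.length * (-1)) • (D (Pn (j+1) (chain D Pn c.blocks b)))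
      = -(D (Pn (j+1) (((-1 : ℝ) ^ c.blocks.length • chain D Pn c.blocks) b)))
  rw [LinearMap.smul_apply, map_smul, map_smul, mul_comm, mul_smul]
  simp

theorem triangle {M : Type*} [AddCommMonoid M] (n : ℕ) (F : ℕ → ℕ → M) :
    ∑ i ∈ Finset.range n, ∑ k ∈ Finset.range (i + 1), F k (i - k)
      = ∑ k ∈ Finset.range n, ∑ m ∈ Finset.range (n - k), F k m := by
  rw [Finset.sum_sigma', Finset.sum_sigma']
  refine Finset.sum_nbij' (fun x => ⟨x.2, x.1 - x.2⟩) (fun x => ⟨x.1 + x.2, x.1⟩)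
    ?_ ?_ ?_ ?_ ?_
  · rintro ⟨i, k⟩ h
    simp only [Finset.mem_sigma, Finset.mem_range] at h ⊢
    omega
  · rintro ⟨k, m⟩ h
    simp only [Finset.mem_sigma, Finset.mem_range] at h ⊢
    omega
  · rintro ⟨i, k⟩ h
    simp only [Finset.mem_sigma, Finset.mem_range] at h
    simp only [Sigma.mk.inj_iff]
    constructor
    · omega
    · exact heq_of_eq rfl
  · rintro ⟨k, m⟩ h
    simp only [Finset.mem_sigma, Finset.mem_range] at h
    simp only [Sigma.mk.inj_iff]
    constructor
    · trivial
    · exact heq_of_eq (by omega)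
  · rintro ⟨i, k⟩ h
    rfl

theorem lemA (A : Submodule ℝ B) (D : B →ₗ[ℝ] B) (Pn : ℕ → B →ₗ[ℝ] B)
    (hPD : ∀ a ∈ A, Pn 0 (D a) = a)
    (hPpos : ∀ n, 0 < n → ∀ u : B, Pn n u ∈ A)
    (a : B) (ha : a ∈ A) (n : ℕ) :
    ∑ p ∈ antidiagonal n, Pn p.1 (dGreen D Pn p.2 a) = if n = 0 then a else 0 := by
  rw [show (∑ p ∈ antidiagonal n, Pn p.1 (dGreen D Pn p.2 a))
      = ∑ p ∈ antidiagonal n, (fun i j => Pn i (dGreen D Pn j a)) p.1 p.2 from rfl,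
    Finset.Nat.sum_antidiagonal_eq_sum_range_succ (fun i j => Pn i (dGreen D Pn j a))]
  cases n with
  | zero => simp [dGreen_zero, hPD a ha]
  | succ n =>
    rw [Finset.sum_range_succ']
    simp only [Nat.succ_sub_succ, Nat.sub_zero]
    have h0 : Pn 0 (dGreen D Pn (n + 1) a)
        = -∑ j ∈ Finset.range (n + 1), Pn (j + 1) (dGreen D Pn (n - j) a) := by
      rw [dGreen_rec, map_neg, map_sum]
      congr 1
      refine Finset.sum_congr rfl fun j _ => ?_
      exact hPD _ (hPpos (j + 1) (Nat.succ_pos j) _)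
    rw [h0]
    simp

theorem lemB (A : Submodule ℝ B) (D : B →ₗ[ℝ] B) (Pn : ℕ → B →ₗ[ℝ] B)
    (hDP : ∀ a ∈ A, D (Pn 0 a) = a)
    (a : B) (ha : a ∈ A) (n : ℕ) :
    ∑ p ∈ antidiagonal n, dGreen D Pn p.1 (Pn p.2 a) = if n = 0 then a else 0 := by
  induction n using Nat.strong_induction_on with
  | _ n ih =>
    cases n with
    | zero => simp [dGreen_zero, hDP a ha]
    | succ n =>
      rw [show (∑ p ∈ antidiagonal (n + 1), dGreen D Pn p.1 (Pn p.2 a))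
          = ∑ p ∈ antidiagonal (n + 1), (fun i j => dGreen D Pn i (Pn j a)) p.1 p.2 from rfl,
        Finset.Nat.sum_antidiagonal_eq_sum_range_succ (fun i j => dGreen D Pn i (Pn j a)),
        Finset.sum_range_succ']
      simp only [Nat.succ_sub_succ, Nat.sub_zero]
      rw [dGreen_zero]
      have h1 : (∑ i ∈ Finset.range (n + 1), dGreen D Pn (i + 1) (Pn (n - i) a))
          = ∑ i ∈ Finset.range (n + 1), ∑ k ∈ Finset.range (i + 1),
              -(D (Pn (k + 1) (dGreen D Pn (i - k) (Pn (n - k - (i - k)) a)))) := by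
        refine Finset.sum_congr rfl fun i hi => ?_
        rw [dGreen_rec, ← Finset.sum_neg_distrib]
        refine Finset.sum_congr rfl fun k hk => ?_
        rw [Finset.mem_range] at hk
        rw [show n - k - (i - k) = n - i from by omega]
      rw [h1, triangle (n + 1) (fun k m => -(D (Pn (k + 1) (dGreen D Pn m (Pn (n - k - m) a)))))]
      have h2 : ∀ k ∈ Finset.range (n + 1),
          (∑ m ∈ Finset.range (n + 1 - k), -(D (Pn (k + 1) (dGreen D Pn m (Pn (n - k - m) a)))))
            = -(D (Pn (k + 1) (if n - k = 0 then a else 0))) := by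
        intro k hk
        rw [Finset.mem_range] at hk
        rw [Finset.sum_neg_distrib, ← map_sum, ← map_sum]
        congr 2
        rw [show n + 1 - k = (n - k) + 1 from by omega]
        rw [← ih (n - k) (by omega)]
        rw [show (∑ p ∈ antidiagonal (n - k), dGreen D Pn p.1 (Pn p.2 a))
            = ∑ p ∈ antidiagonal (n - k), (fun i j => dGreen D Pn i (Pn j a)) p.1 p.2 from rfl,
          Finset.Nat.sum_antidiagonal_eq_sum_range_succ (fun i j => dGreen D Pn i (Pn j a))]
      rw [Finset.sum_congr rfl h2, Finset.sum_eq_single n]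
      · simp
      · intro k hk hkn
        rw [Finset.mem_range] at hk
        rw [if_neg (by omega)]
        simp
      · intro h
        exact absurd (Finset.self_mem_range_succ n) h

theorem star_cancel (F G : ℕ → B →ₗ[ℝ] B) (u : ℕ → B)
    (h : ∀ m n : ℕ, ∑ p ∈ antidiagonal n, F p.1 (G p.2 (u m)) = if n = 0 then u m else 0) :
    starMap (K := ℝ) F (starMap G u) = u := by
  funext n
  rw [starMap_apply]
  calc ∑ p ∈ antidiagonal n, F p.1 (starMap G u p.2)
      = ∑ p ∈ antidiagonal n, ∑ q ∈ antidiagonal p.2, F p.1 (G q.1 (u q.2)) := by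
        refine Finset.sum_congr rfl fun p _ => ?_
        rw [starMap_apply, map_sum]
    _ = ∑ p ∈ antidiagonal n, ∑ q ∈ antidiagonal p.1, F q.1 (G q.2 (u p.2)) :=
        sum_ad_assoc n fun a b c => F a (G b (u c))
    _ = ∑ p ∈ antidiagonal n, (if p.1 = 0 then u p.2 else 0) :=
        Finset.sum_congr rfl fun p _ => h p.2 p.1
    _ = u n := by
        rw [Finset.sum_eq_single (0, n)]
        · simp
        · rintro ⟨i, j⟩ hmem hne
          rw [if_neg]
          rintro rfl
          apply hne
          simp only [Finset.HasAntidiagonal.mem_antidiagonal] at hmem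
          simp [← hmem]
        · intro h'
          exact absurd (by simp) h'

/-- `P_⋆ ∘ Δ_⋆± = id` on `A[[λ]]`. -/
theorem key1 (A : Submodule ℝ B) (D : B →ₗ[ℝ] B) (Pn : ℕ → B →ₗ[ℝ] B)
    (hPD : ∀ a ∈ A, Pn 0 (D a) = a)
    (hPpos : ∀ n, 0 < n → ∀ u : B, Pn n u ∈ A)
    (φ : ℕ → ↥A) :
    starMap (K := ℝ) Pn (starMap (dGreen D Pn) (cwMap A.subtype φ)) = cwMap A.subtype φ :=
  star_cancel Pn (dGreen D Pn) (cwMap A.subtype φ)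
    (fun m n => lemA A D Pn hPD hPpos (φ m : B) (φ m).2 n)

/-- `Δ_⋆± ∘ P_⋆ = id` on `A[[λ]]`. -/
theorem key2 (A : Submodule ℝ B) (D : B →ₗ[ℝ] B) (Pn : ℕ → B →ₗ[ℝ] B)
    (hDP : ∀ a ∈ A, D (Pn 0 a) = a)
    (φ : ℕ → ↥A) :
    starMap (K := ℝ) (dGreen D Pn) (starMap Pn (cwMap A.subtype φ)) = cwMap A.subtype φ :=
  star_cancel (dGreen D Pn) Pn (cwMap A.subtype φ)
    (fun m n => lemB A D Pn hDP (φ m : B) (φ m).2 n)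

/-- `cwMap A.subtype` intertwines `starMap (restA …)` and `starMap Pn`. -/
theorem comm_restA (A : Submodule ℝ B) (Pn : ℕ → B →ₗ[ℝ] B)
    (hPA : ∀ a ∈ A, Pn 0 a ∈ A) (hPpos : ∀ n, 0 < n → ∀ u : B, Pn n u ∈ A)
    (ψ : ℕ → ↥A) :
    cwMap A.subtype (starMap (restA A Pn hPA hPpos) ψ) =
      starMap (K := ℝ) Pn (cwMap A.subtype ψ) := by
  funext n
  rw [cwMap_apply, starMap_apply, starMap_apply, map_sum]
  refine Finset.sum_congr rfl fun p _ => ?_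
  rw [cwMap_apply, restA]
  rfl

/-- Successive approximations for a recursively defined sequence. -/
def approx {α : Type*} [Zero α] (next : (ℕ → α) → ℕ → α) : ℕ → (ℕ → α)
  | 0 => fun _ => 0
  | n + 1 => Function.update (approx next n) n (next (approx next n) n)

/-- The sequence defined by the recursion `ψ n = next ψ n`
(where `next f n` may only use `f m` for `m < n`). -/
def diag {α : Type*} [Zero α] (next : (ℕ → α) → ℕ → α) (n : ℕ) : α :=
  approx next (n + 1) n

theorem approx_eq_diag {α : Type*} [Zero α] (next : (ℕ → α) → ℕ → α) :
    ∀ k m, m < k → approx next k m = diag next m := by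
  intro k
  induction k with
  | zero => intro m hm; omega
  | succ k ih =>
    intro m hm
    rcases Nat.lt_succ_iff_lt_or_eq.mp hm with h | rfl
    · rw [approx, Function.update_of_ne (by omega), ih m h]
    · rfl

theorem diag_eq {α : Type*} [Zero α] (next : (ℕ → α) → ℕ → α)
    (hdep : ∀ f g n, (∀ m, m < n → f m = g m) → next f n = next g n) (n : ℕ) :
    diag next n = next (diag next) n := by
  show approx next (n + 1) n = _
  rw [approx, Function.update_self]
  exact hdep _ _ n (fun m hm => approx_eq_diag next n m hm)

theorem star_coeff_top (G : ℕ → B →ₗ[ℝ] B) (χ : ℕ → B) (n : ℕ)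
    (h : ∀ m, m < n → χ m = 0) :
    starMap (K := ℝ) G χ n = G 0 (χ n) := by
  rw [starMap_apply, Finset.sum_eq_single (0, n)]
  · rintro ⟨i, j⟩ hmem hne
    simp only [Finset.HasAntidiagonal.mem_antidiagonal] at hmem
    have hj : j < n := by
      rcases Nat.eq_zero_or_pos i with rfl | hi
      · exact absurd (by simp [← hmem]) hne
      · omega
    rw [h j hj, map_zero]
  · intro h'
    exact absurd (by simp) h'

theorem ad_sum_split (G : ℕ → B →ₗ[ℝ] B) (v : ℕ → B) (n : ℕ) :
    ∑ p ∈ antidiagonal n, G p.1 (v p.2)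
      = G 0 (v n) + ∑ j ∈ Finset.range n, G (n - j) (v j) := by
  rw [show (∑ p ∈ antidiagonal n, G p.1 (v p.2))
      = ∑ p ∈ antidiagonal n, (fun i j => G i (v j)) p.1 p.2 from rfl,
    Finset.Nat.sum_antidiagonal_eq_sum_range_succ (fun i j => G i (v j)),
    Finset.sum_range_succ']
  rw [add_comm, Nat.sub_zero]
  congr 1
  rw [← Finset.sum_range_reflect (fun j => G (n - j) (v j)) n]
  refine Finset.sum_congr rfl fun i hi => ?_
  rw [Finset.mem_range] at hi
  rw [show n - (n - 1 - i) = i + 1 from by omega, show n - 1 - i = n - (i + 1) from by omega]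

open Classical in
def pick1 (A : Submodule ℝ B) (P0 : B →ₗ[ℝ] B) (x : B) : ↥A :=
  if h : ∃ b : ↥A, x = P0 ↑b then h.choose else 0

open Classical in
theorem pick1_spec (A : Submodule ℝ B) (P0 : B →ₗ[ℝ] B) (x : B)
    (h : ∃ b : ↥A, x = P0 ↑b) : x = P0 ↑(pick1 A P0 x) := by
  rw [pick1, dif_pos h]
  exact h.choose_spec

open Classical in
def pick2 (A : Submodule ℝ B) (Dp Dm : B →ₗ[ℝ] B) (x : B) : ↥A :=
  if h : ∃ a : ↥A, x = Dp ↑a - Dm ↑a then h.choose else 0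

open Classical in
theorem pick2_spec (A : Submodule ℝ B) (Dp Dm : B →ₗ[ℝ] B) (x : B)
    (h : ∃ a : ↥A, x = Dp ↑a - Dm ↑a) :
    x = Dp ↑(pick2 A Dp Dm x) - Dm ↑(pick2 A Dp Dm x) := by
  rw [pick2, dif_pos h]
  exact h.choose_spec

theorem ker_sub (A : Submodule ℝ B) (Pn : ℕ → B →ₗ[ℝ] B)
    (hPA : ∀ a ∈ A, Pn 0 a ∈ A) (hPpos : ∀ n, 0 < n → ∀ u : B, Pn n u ∈ A)
    (Dp Dm : B →ₗ[ℝ] B)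
    (hDpP : ∀ a ∈ A, Dp (Pn 0 a) = a) (hDmP : ∀ a ∈ A, Dm (Pn 0 a) = a)
    (hex₁ : ∀ a ∈ A, Dp a - Dm a = 0 → ∃ b ∈ A, a = Pn 0 b)
    (φ : ℕ → ↥A)
    (hφ : starMap (K := ℝ) (dGreen Dp Pn) (cwMap A.subtype φ)
        - starMap (K := ℝ) (dGreen Dm Pn) (cwMap A.subtype φ) = 0) :
    ∃ ψ : ℕ → ↥A, starMap (restA A Pn hPA hPpos) ψ = φ := by
  set nxt : (ℕ → ↥A) → ℕ → ↥A := fun f k =>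
    pick1 A (Pn 0) ((φ k : B) - ∑ j ∈ Finset.range k, Pn (k - j) (f j : B)) with hnxt
  have hdep : ∀ f g k, (∀ m, m < k → f m = g m) → nxt f k = nxt g k := by
    intro f g k hfg
    simp only [hnxt]
    congr 2
    exact Finset.sum_congr rfl fun j hj => by rw [hfg j (Finset.mem_range.mp hj)]
  set ψ : ℕ → ↥A := diag nxt with hψdef
  have hψ : ∀ k, ψ k = nxt ψ k := diag_eq nxt hdep
  have main : ∀ n, starMap (K := ℝ) Pn (cwMap A.subtype ψ) n = (φ n : B) := by
    intro n
    induction n using Nat.strong_induction_on with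
    | _ n ih =>
      set χ : ℕ → B := cwMap A.subtype φ - starMap (K := ℝ) Pn (cwMap A.subtype ψ) with hχdef
      have hχ : ∀ m, m < n → χ m = 0 := by
        intro m hm
        show (cwMap A.subtype φ) m - starMap (K := ℝ) Pn (cwMap A.subtype ψ) m = 0
        rw [ih m hm]
        exact sub_self _
      have hΔχ : starMap (K := ℝ) (dGreen Dp Pn) χ
          - starMap (K := ℝ) (dGreen Dm Pn) χ = 0 := by
        rw [hχdef, map_sub, map_sub, key2 A Dp Pn hDpP ψ, key2 A Dm Pn hDmP ψ,
          sub_sub_sub_cancel_right]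
        exact hφ
      have hcoef : Dp (χ n) - Dm (χ n) = 0 := by
        have h := congrFun hΔχ n
        rw [show (starMap (K := ℝ) (dGreen Dp Pn) χ - starMap (K := ℝ) (dGreen Dm Pn) χ) n
            = starMap (K := ℝ) (dGreen Dp Pn) χ n
              - starMap (K := ℝ) (dGreen Dm Pn) χ n from rfl,
          star_coeff_top _ _ n hχ, star_coeff_top _ _ n hχ, dGreen_zero, dGreen_zero] at h
        exact h
      set a : B := (φ n : B) - ∑ j ∈ Finset.range n, Pn (n - j) (ψ j : B) with ha
      have hχn : χ n = a - Pn 0 (ψ n : B) := by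
        show (cwMap A.subtype φ) n - starMap (K := ℝ) Pn (cwMap A.subtype ψ) n = _
        rw [starMap_apply, ad_sum_split Pn (cwMap A.subtype ψ) n, ha]
        simp only [cwMap_apply, Submodule.subtype_apply]
        abel
      have haA : a ∈ A := by
        rw [ha]
        refine A.sub_mem (φ n).2 (Submodule.sum_mem _ fun j hj => ?_)
        exact hPpos (n - j) (by rw [Finset.mem_range] at hj; omega) _
      have hΔa : Dp a - Dm a = 0 := by
        have h1 : a = χ n + Pn 0 (ψ n : B) := by rw [hχn]; abel
        rw [h1, map_add, map_add, hDpP _ (ψ n).2, hDmP _ (ψ n).2,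
          add_sub_add_right_eq_sub]
        exact hcoef
      obtain ⟨b, hb, heq⟩ := hex₁ a haA hΔa
      have hps : a = Pn 0 ↑(pick1 A (Pn 0) a) := pick1_spec A (Pn 0) a ⟨⟨b, hb⟩, heq⟩
      have hpn : (ψ n : B) = ↑(pick1 A (Pn 0) a) := by
        rw [hψ n, hnxt]
      have hχn0 : χ n = 0 := by
        rw [hχn, hpn, ← hps, sub_self]
      have := sub_eq_zero.mp hχn0
      exact this.symm
  refine ⟨ψ, funext fun k => Subtype.ext ?_⟩
  have h := congrFun (comm_restA A Pn hPA hPpos ψ) k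
  rw [cwMap_apply, Submodule.subtype_apply] at h
  rw [h, main k]

theorem surj_lemma (A : Submodule ℝ B) (Pn : ℕ → B →ₗ[ℝ] B)
    (hPpos : ∀ n, 0 < n → ∀ u : B, Pn n u ∈ A)
    (Dp Dm : B →ₗ[ℝ] B)
    (hPDp : ∀ a ∈ A, Pn 0 (Dp a) = a) (hPDm : ∀ a ∈ A, Pn 0 (Dm a) = a)
    (hex₂ : ∀ u : B, Pn 0 u = 0 → ∃ a ∈ A, u = Dp a - Dm a)
    (u : ℕ → B) (hu : starMap (K := ℝ) Pn u = 0) :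
    ∃ φ : ℕ → ↥A, starMap (K := ℝ) (dGreen Dp Pn) (cwMap A.subtype φ)
      - starMap (K := ℝ) (dGreen Dm Pn) (cwMap A.subtype φ) = u := by
  set nxt : (ℕ → ↥A) → ℕ → ↥A := fun f k =>
    pick2 A Dp Dm (u k - ∑ j ∈ Finset.range k,
      (dGreen Dp Pn (k - j) (f j : B) - dGreen Dm Pn (k - j) (f j : B))) with hnxt
  have hdep : ∀ f g k, (∀ m, m < k → f m = g m) → nxt f k = nxt g k := by
    intro f g k hfg
    simp only [hnxt]
    congr 2
    exact Finset.sum_congr rfl fun j hj => by rw [hfg j (Finset.mem_range.mp hj)]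
  set φ : ℕ → ↥A := diag nxt with hφdef
  have hφ : ∀ k, φ k = nxt φ k := diag_eq nxt hdep
  have main : ∀ n, starMap (K := ℝ) (dGreen Dp Pn) (cwMap A.subtype φ) n
      - starMap (K := ℝ) (dGreen Dm Pn) (cwMap A.subtype φ) n = u n := by
    intro n
    induction n using Nat.strong_induction_on with
    | _ n ih =>
      set χ : ℕ → B := u - (starMap (K := ℝ) (dGreen Dp Pn) (cwMap A.subtype φ)
          - starMap (K := ℝ) (dGreen Dm Pn) (cwMap A.subtype φ)) with hχdef
      have hχ : ∀ m, m < n → χ m = 0 := by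
        intro m hm
        show u m - (starMap (K := ℝ) (dGreen Dp Pn) (cwMap A.subtype φ) m
            - starMap (K := ℝ) (dGreen Dm Pn) (cwMap A.subtype φ) m) = 0
        rw [ih m hm]
        exact sub_self _
      have hPχ : starMap (K := ℝ) Pn χ = 0 := by
        rw [hχdef, map_sub, map_sub, key1 A Dp Pn hPDp hPpos φ, key1 A Dm Pn hPDm hPpos φ,
          sub_self, sub_zero, hu]
      have hcoef : Pn 0 (χ n) = 0 := by
        have h := congrFun hPχ n
        rw [star_coeff_top _ _ n hχ] at h
        exact h
      set a : B := u n - ∑ j ∈ Finset.range n,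
          (dGreen Dp Pn (n - j) (φ j : B) - dGreen Dm Pn (n - j) (φ j : B)) with ha
      have hχn : χ n = a - (Dp (φ n : B) - Dm (φ n : B)) := by
        show u n - (starMap (K := ℝ) (dGreen Dp Pn) (cwMap A.subtype φ) n
            - starMap (K := ℝ) (dGreen Dm Pn) (cwMap A.subtype φ) n) = _
        rw [starMap_apply, starMap_apply, ad_sum_split (dGreen Dp Pn) (cwMap A.subtype φ) n,
          ad_sum_split (dGreen Dm Pn) (cwMap A.subtype φ) n, dGreen_zero, dGreen_zero, ha,
          Finset.sum_sub_distrib]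
        simp only [cwMap_apply, Submodule.subtype_apply]
        abel
      have hPa : Pn 0 a = 0 := by
        have h1 : a = χ n + (Dp (φ n : B) - Dm (φ n : B)) := by rw [hχn]; abel
        rw [h1, map_add, map_sub, hPDp _ (φ n).2, hPDm _ (φ n).2, hcoef]
        abel
      obtain ⟨c, hc, heq⟩ := hex₂ a hPa
      have hps : a = Dp ↑(pick2 A Dp Dm a) - Dm ↑(pick2 A Dp Dm a) :=
        pick2_spec A Dp Dm a ⟨⟨c, hc⟩, heq⟩
      have hpn : (φ n : B) = ↑(pick2 A Dp Dm a) := by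
        rw [hφ n, hnxt]
      have hχn0 : χ n = 0 := by
        rw [hχn, hpn, ← hps, sub_self]
      have := sub_eq_zero.mp hχn0
      exact this.symm
  exact ⟨φ, funext fun n => main n⟩

/-- the map `𝓘_⋆ : [φ] ↦ Δ_⋆(φ)` is a well-defined `ℝ[[λ]]`-module isomorphism
from the quotient module `A[[λ]]/P_⋆[A[[λ]]]` onto the solution module
`Sol_{P_⋆} = {u ∈ B[[λ]] : P_⋆(u) = 0}`. -/
theorem statement_2
    (A : Submodule ℝ B)
    -- the family `P_(n)` (`P := P_(0)`), with `P(A) ⊆ A` and `P_(n) : B → A` for `n ≥ 1`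
    (Pn : ℕ → B →ₗ[ℝ] B)
    (hPA : ∀ a ∈ A, Pn 0 a ∈ A)
    (hPpos : ∀ n, 0 < n → ∀ u : B, Pn n u ∈ A)
    -- the undeformed retarded/advanced Green's operators `Δ_±` (defined on `A`)
    (Dp Dm : B →ₗ[ℝ] B)
    (hPDp : ∀ a ∈ A, Pn 0 (Dp a) = a) (hDpP : ∀ a ∈ A, Dp (Pn 0 a) = a)
    (hPDm : ∀ a ∈ A, Pn 0 (Dm a) = a) (hDmP : ∀ a ∈ A, Dm (Pn 0 a) = a)
    -- undeformed exactness: `ker Δ ∩ A = P(A)` and `ker P = Δ(A)`, where `Δ = Δ_+ − Δ_−`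
    (hex₁ : ∀ a ∈ A, Dp a - Dm a = 0 → ∃ b ∈ A, a = Pn 0 b)
    (hex₂ : ∀ u : B, Pn 0 u = 0 → ∃ a ∈ A, u = Dp a - Dm a)
 :
    ∃ e : ((ℕ → ↥A) ⧸ LinearMap.range (starMap (restA A Pn hPA hPpos))) ≃ₗ[PowerSeries ℝ]
          ↥(LinearMap.ker (starMap Pn)),
      ∀ φ : ℕ → ↥A,
        (e (Submodule.Quotient.mk φ) : ℕ → B)
          = starMap (dGreen Dp Pn) (cwMap A.subtype φ)
            - starMap (dGreen Dm Pn) (cwMap A.subtype φ) := by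
  classical
  set T : (ℕ → ↥A) →ₗ[PowerSeries ℝ] (ℕ → B) :=
    (starMap (dGreen Dp Pn) - starMap (dGreen Dm Pn)) ∘ₗ cwMap A.subtype with hT
  have hTapp : ∀ φ : ℕ → ↥A, T φ = starMap (K := ℝ) (dGreen Dp Pn) (cwMap A.subtype φ)
      - starMap (K := ℝ) (dGreen Dm Pn) (cwMap A.subtype φ) := fun φ => rfl
  have hmem : ∀ φ : ℕ → ↥A, T φ ∈ LinearMap.ker (starMap (K := ℝ) Pn) := by
    intro φ
    rw [LinearMap.mem_ker, hTapp, map_sub, key1 A Dp Pn hPDp hPpos φ,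
      key1 A Dm Pn hPDm hPpos φ, sub_self]
  set T' := T.codRestrict (LinearMap.ker (starMap (K := ℝ) Pn)) hmem with hT'
  have hT'app : ∀ φ : ℕ → ↥A, ((T' φ : ℕ → B)) = T φ := fun φ => rfl
  have hker : LinearMap.range (starMap (restA A Pn hPA hPpos)) = LinearMap.ker T' := by
    ext φ
    constructor
    · rintro ⟨ψ, rfl⟩
      rw [LinearMap.mem_ker]
      apply Subtype.ext
      rw [hT'app, hTapp, comm_restA A Pn hPA hPpos ψ, key2 A Dp Pn hDpP ψ,
        key2 A Dm Pn hDmP ψ, sub_self]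
      rfl
    · intro hφ
      have h0 : T φ = 0 := by
        rw [← hT'app, LinearMap.mem_ker.mp hφ]
        rfl
      rw [hTapp] at h0
      exact ker_sub A Pn hPA hPpos Dp Dm hDpP hDmP hex₁ φ h0
  have hsurj : Function.Surjective T' := by
    rintro ⟨u, hu⟩
    obtain ⟨φ, hφ⟩ := surj_lemma A Pn hPpos Dp Dm hPDp hPDm hex₂ u (LinearMap.mem_ker.mp hu)
    exact ⟨φ, Subtype.ext (by rw [hT'app, hTapp]; exact hφ)⟩
  refine ⟨(Submodule.quotEquivOfEq _ _ hker).trans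
      ((LinearMap.quotKerEquivRange T').trans
        (LinearEquiv.ofTop _ (LinearMap.range_eq_top.mpr hsurj))), ?_⟩
  intro φ
  rw [LinearEquiv.trans_apply, LinearEquiv.trans_apply, Submodule.quotEquivOfEq_mk,
    LinearEquiv.ofTop_apply, LinearMap.quotKerEquivRange_apply_mk, hT'app, hTapp]

end NCQFT
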